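/- Let A, B be n×n positive definite complex matrices and let m, m', M, M' be positive reals satisfying either m'·I ≤ A ≤ m·I < M·I ≤ B ≤ M'·I or m'·I ≤ B ≤ m·I < M·I ≤ A ≤ M'·I in the Loewner order. If 0 < v ≤ 1/2, then A∇_v B ≥ 2v(A∇B − A#B) + r₁(A#B − 2(A#_{1/4}B) + A) + K(h^{1/4}, 2)^{r̂₁} · (A#_v B) in the Loewner order, where h = M/m, r = min{v, 1 − v}, r₁ = min{2r, 1 − 2r} and r̂₁ = min{2r₁, 1 − 2r₁}. -/

import Mathlib

open Matrix
open scoped ComplexOrder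

/-- Real power of a matrix, defined for Hermitian matrices via the spectral
decomposition (functional calculus); junk value otherwise. -/
noncomputable def mrpow {n : ℕ} (A : Matrix (Fin n) (Fin n) ℂ) (t : ℝ) :
    Matrix (Fin n) (Fin n) ℂ :=
  if h : A.IsHermitian then
    (h.eigenvectorUnitary : Matrix (Fin n) (Fin n) ℂ)
      * Matrix.diagonal (fun i => ((h.eigenvalues i ^ t : ℝ) : ℂ))
      * star (h.eigenvectorUnitary : Matrix (Fin n) (Fin n) ℂ)
  else A

/-- Weighted arithmetic mean `A ∇_v B = (1 - v) A + v B`. -/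
noncomputable def anabla {n : ℕ} (v : ℝ) (A B : Matrix (Fin n) (Fin n) ℂ) :
    Matrix (Fin n) (Fin n) ℂ :=
  ((1 - v : ℝ) : ℂ) • A + ((v : ℝ) : ℂ) • B

/-- Weighted geometric mean `A #_v B = A^{1/2} (A^{-1/2} B A^{-1/2})^v A^{1/2}`. -/
noncomputable def asharp {n : ℕ} (v : ℝ) (A B : Matrix (Fin n) (Fin n) ℂ) :
    Matrix (Fin n) (Fin n) ℂ :=
  mrpow A (1 / 2) * mrpow (mrpow A (-(1 / 2)) * B * mrpow A (-(1 / 2))) v * mrpow A (1 / 2)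

/-- Heinz operator mean `H_v(A, B) = (A #_v B + A #_{1-v} B) / 2`. -/
noncomputable def heinz {n : ℕ} (v : ℝ) (A B : Matrix (Fin n) (Fin n) ℂ) :
    Matrix (Fin n) (Fin n) ℂ :=
  ((1 / 2 : ℝ) : ℂ) • (asharp v A B + asharp (1 - v) A B)

/-- The Loewner order: `loewner X Y` iff `Y - X` is positive semidefinite. -/
def loewner {n : ℕ} (X Y : Matrix (Fin n) (Fin n) ℂ) : Prop := (Y - X).PosSemidef

/-- The Kantorovich constant `K(t, 2) = (t + 1)^2 / (4 t)`. -/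
noncomputable def Kant (t : ℝ) : ℝ := (t + 1) ^ 2 / (4 * t)

/-!
With `T = A^{-1/2} B A^{-1/2}`, each mean in the inequality is the operator perspective
`A^{1/2} f(T) A^{1/2}` of a scalar function `f` (`1`, `x`, `x ^ w`), and this is linear in `f`
and monotone in the values of `f` on the spectrum of `T`. So it suffices to prove the scalar
inequality on that spectrum, which the bounds on `A` and `B` place in `[h, ∞)` or `(0, h⁻¹]`.
There, with `y = x ^ (1/4)`, the claim is the Kantorovich refinement of Young's inequality
`K(z) ^ min u (1 - u) * z ^ u ≤ (1 - u) + u z` at `z = y` and `u = 4v` when `v ≤ 1/4`, and at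
`u = 4v - 1`, multiplied by `y`, when `v ≥ 1/4`; since `K` is increasing on `[1, ∞)` and
`K(z⁻¹) = K(z)`, `K(y) ≥ K(h ^ (1/4))`.
-/

section Kantorovich

lemma Kant_pos {t : ℝ} (ht : 0 < t) : 0 < Kant t := by
  unfold Kant; positivity

lemma Kant_le_Kant {t z : ℝ} (ht : 1 ≤ t) (htz : t ≤ z) : Kant t ≤ Kant z := by
  rw [Kant, Kant, div_le_div_iff₀ (by linarith) (by linarith)]
  nlinarith [mul_nonneg (sub_nonneg.2 htz)
    (sub_nonneg.2 (one_le_mul_of_one_le_of_one_le ht (ht.trans htz)))]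

lemma Kant_inv (z : ℝ) : Kant z⁻¹ = Kant z := by
  rcases eq_or_ne z 0 with rfl | hz
  · rw [_root_.inv_zero]
  · rw [Kant, Kant]; field_simp; ring

lemma Kant_le_Kant_of_le_or_le_inv {t z : ℝ} (ht : 1 ≤ t) (hz : 0 < z)
    (htz : t ≤ z ∨ z ≤ t⁻¹) : Kant t ≤ Kant z := by
  rcases htz with htz | hzt
  · exact Kant_le_Kant ht htz
  · rw [← Kant_inv z]
    exact Kant_le_Kant ht ((le_inv_comm₀ (by linarith) hz).2 hzt)

lemma Kant_mul_eq_sq {z : ℝ} (hz : z ≠ 0) : Kant z * z = ((z + 1) / 2) ^ (2 : ℝ) := by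
  rw [Kant, Real.rpow_two]; field_simp; ring

lemma Kant_rpow_mul_rpow_le {u z : ℝ} (hu0 : 0 ≤ u) (hu1 : u ≤ 1) (hz : 0 < z) :
    Kant z ^ min u (1 - u) * z ^ u ≤ (1 - u) + u * z := by
  have hmid : 0 ≤ (z + 1) / 2 := by positivity
  rcases le_total u (1 / 2) with hu | hu
  · -- `(K z · z)^u = ((z+1)/2)^(2u)`, then weighted AM-GM between `1` and `(z+1)/2`
    rw [min_eq_left (by linarith), ← Real.mul_rpow (Kant_pos hz).le hz.le, Kant_mul_eq_sq hz.ne',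
      ← Real.rpow_mul hmid]
    have := Real.geom_mean_le_arith_mean2_weighted (by linarith : 0 ≤ 1 - 2 * u)
      (by linarith : 0 ≤ 2 * u) zero_le_one hmid (by ring)
    rw [Real.one_rpow, one_mul] at this
    linarith
  · -- `K z ^ (1-u) · z ^ u = ((z+1)/2)^(2-2u) · z^(2u-1)`, then weighted AM-GM
    have hsplit : Kant z ^ (1 - u) * z ^ u = ((z + 1) / 2) ^ (2 - 2 * u) * z ^ (2 * u - 1) := by
      rw [show z ^ u = z ^ (1 - u) * z ^ (2 * u - 1) by rw [← Real.rpow_add hz]; ring_nf,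
        ← mul_assoc, ← Real.mul_rpow (Kant_pos hz).le hz.le, Kant_mul_eq_sq hz.ne',
        ← Real.rpow_mul hmid]
      ring_nf
    rw [min_eq_right (by linarith), hsplit]
    have := Real.geom_mean_le_arith_mean2_weighted (by linarith : 0 ≤ 2 - 2 * u)
      (by linarith : 0 ≤ 2 * u - 1) hmid hz.le (by ring)
    linarith

lemma Kant_rpow_mul_rpow_le_of_le_or_le_inv {u t z : ℝ} (hu0 : 0 ≤ u) (hu1 : u ≤ 1)
    (ht : 1 ≤ t) (hz : 0 < z) (htz : t ≤ z ∨ z ≤ t⁻¹) :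
    Kant t ^ min u (1 - u) * z ^ u ≤ (1 - u) + u * z := by
  refine le_trans ?_ (Kant_rpow_mul_rpow_le hu0 hu1 hz)
  gcongr ?_ * _
  exact Real.rpow_le_rpow (Kant_pos (by linarith)).le (Kant_le_Kant_of_le_or_le_inv ht hz htz)
    (le_min hu0 (by linarith))

end Kantorovich

lemma young_refinement_le {v r1 rh1 h x : ℝ} (hv0 : 0 < v) (hv : v ≤ 1 / 2) (hh : 1 ≤ h)
    (hr1 : r1 = min (2 * v) (1 - 2 * v)) (hrh1 : rh1 = min (2 * r1) (1 - 2 * r1))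
    (hx : 0 < x) (hxh : h ≤ x ∨ x ≤ h⁻¹) :
    2 * v * ((1 - 1 / 2) + 1 / 2 * x - x ^ (1 / 2 : ℝ))
      + r1 * (x ^ (1 / 2 : ℝ) - 2 * x ^ (1 / 4 : ℝ) + 1)
      + Kant (h ^ (1 / 4 : ℝ)) ^ rh1 * x ^ v ≤ (1 - v) + v * x := by
  -- everything is a polynomial in `y = x ^ (1/4)`, up to the term `y ^ (4 v)`
  set y := x ^ (1 / 4 : ℝ) with hy_def
  have hy : 0 < y := Real.rpow_pos_of_pos hx _
  have hx4 : x = y ^ 4 := by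
    rw [hy_def, ← Real.rpow_natCast, ← Real.rpow_mul hx.le]; norm_num
  have hx2 : x ^ (1 / 2 : ℝ) = y ^ 2 := by
    rw [hy_def, ← Real.rpow_natCast, ← Real.rpow_mul hx.le]; norm_num
  have hxv : x ^ v = y ^ (4 * v) := by
    rw [hy_def, ← Real.rpow_mul hx.le]; ring_nf
  have ht : 1 ≤ h ^ (1 / 4 : ℝ) := Real.one_le_rpow hh (by norm_num)
  have hyt : h ^ (1 / 4 : ℝ) ≤ y ∨ y ≤ (h ^ (1 / 4 : ℝ))⁻¹ := by
    rw [← Real.inv_rpow (by linarith)]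
    exact hxh.imp (Real.rpow_le_rpow (by linarith) · (by norm_num))
      (Real.rpow_le_rpow hx.le · (by norm_num))
  rw [hx2, hxv, hx4]
  rcases le_total v (1 / 4) with hv4 | hv4
  · have hr1' : r1 = 2 * v := by rw [hr1, min_eq_left (by linarith)]
    have key := Kant_rpow_mul_rpow_le_of_le_or_le_inv (u := 4 * v) (by linarith) (by linarith)
      ht hy hyt
    rw [hrh1, hr1', show 2 * (2 * v) = 4 * v by ring]
    linarith
  · have hr1' : r1 = 1 - 2 * v := by rw [hr1, min_eq_right (by linarith)]
    have key := Kant_rpow_mul_rpow_le_of_le_or_le_inv (u := 4 * v - 1) (by linarith)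
      (by linarith) ht hy hyt
    have hsplit : y ^ (4 * v) = y ^ (4 * v - 1) * y := by
      rw [← Real.rpow_add_one hy.ne']; ring_nf
    have hrh1' : rh1 = min (4 * v - 1) (1 - (4 * v - 1)) := by
      rw [hrh1, hr1', min_comm]; ring_nf
    rw [hr1', hrh1', hsplit]
    linarith [mul_le_mul_of_nonneg_right key hy.le]

open scoped MatrixOrder

section OperatorPerspective

variable {n : ℕ} {A B : Matrix (Fin n) (Fin n) ℂ}

lemma loewner_iff_le {X Y : Matrix (Fin n) (Fin n) ℂ} : loewner X Y ↔ X ≤ Y := Iff.rfl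

lemma ofReal_smul_one (c : ℝ) :
    (c : ℂ) • (1 : Matrix (Fin n) (Fin n) ℂ) = algebraMap ℝ _ c := by
  rw [Algebra.algebraMap_eq_smul_one, Complex.coe_smul]

lemma mrpow_eq_cfc (hA : A.IsHermitian) (t : ℝ) :
    mrpow A t = cfc (fun x : ℝ => x ^ t) A := by
  rw [hA.cfc_eq, mrpow, dif_pos hA, IsHermitian.cfc]
  simp [Function.comp_def]

lemma isHermitian_mrpow (hA : A.IsHermitian) (t : ℝ) : (mrpow A t).IsHermitian := by
  rw [mrpow_eq_cfc hA]
  exact cfc_predicate _ A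

lemma mrpow_mul_mrpow (hA : A.PosDef) (s t : ℝ) :
    mrpow A s * mrpow A t = mrpow A (s + t) := by
  rw [mrpow_eq_cfc hA.1, mrpow_eq_cfc hA.1, mrpow_eq_cfc hA.1,
    ← cfc_mul _ _ A (finite_real_spectrum.continuousOn _) (finite_real_spectrum.continuousOn _)]
  refine cfc_congr fun x hx => ?_
  exact (Real.rpow_add (hA.isStrictlyPositive.spectrum_pos hx) s t).symm

lemma mrpow_zero (hA : A.IsHermitian) : mrpow A 0 = 1 := by
  simp only [mrpow_eq_cfc hA, Real.rpow_zero]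
  exact cfc_const_one ℝ A

lemma mrpow_mul_mrpow_neg (hA : A.PosDef) (t : ℝ) : mrpow A t * mrpow A (-t) = 1 := by
  rw [mrpow_mul_mrpow hA, add_neg_cancel, mrpow_zero hA.1]

lemma mrpow_one (hA : A.IsHermitian) : mrpow A 1 = A := by
  simp only [mrpow_eq_cfc hA, Real.rpow_one]
  exact cfc_id' ℝ A

noncomputable def operatorPerspective (A B : Matrix (Fin n) (Fin n) ℂ) :
    (ℝ → ℝ) →ₗ[ℝ] Matrix (Fin n) (Fin n) ℂ where
  toFun f :=
    mrpow A (1 / 2) * cfc f (mrpow A (-(1 / 2)) * B * mrpow A (-(1 / 2))) * mrpow A (1 / 2)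
  map_add' f g := by
    rw [Pi.add_def, cfc_add _ _ _ (finite_real_spectrum.continuousOn _)
      (finite_real_spectrum.continuousOn _), mul_add, add_mul]
  map_smul' c f := by
    rw [Pi.smul_def, cfc_smul _ _ _ (finite_real_spectrum.continuousOn _), mul_smul_comm,
      smul_mul_assoc]
    rfl

lemma isHermitian_mrpow_neg_half_conj (hA : A.IsHermitian) (hB : B.IsHermitian) :
    (mrpow A (-(1 / 2)) * B * mrpow A (-(1 / 2))).IsHermitian := by
  simpa [(isHermitian_mrpow hA _).eq] using
    isHermitian_mul_mul_conjTranspose (mrpow A (-(1 / 2))) hB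

lemma operatorPerspective_rpow (hA : A.IsHermitian) (hB : B.IsHermitian) (w : ℝ) :
    operatorPerspective A B (· ^ w) = asharp w A B := by
  rw [asharp, mrpow_eq_cfc (isHermitian_mrpow_neg_half_conj hA hB)]
  rfl

lemma operatorPerspective_one (hA : A.PosDef) (hB : B.IsHermitian) :
    operatorPerspective A B 1 = A := by
  change _ * cfc (fun _ => (1 : ℝ)) _ * _ = A
  rw [cfc_const_one ℝ _ (isHermitian_mrpow_neg_half_conj hA.1 hB).isSelfAdjoint, mul_one,
    mrpow_mul_mrpow hA]
  norm_num [mrpow_one hA.1]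

lemma operatorPerspective_id (hA : A.PosDef) (hB : B.IsHermitian) :
    operatorPerspective A B id = B := by
  change _ * cfc (fun x : ℝ => x) _ * _ = B
  rw [cfc_id' ℝ _ (isHermitian_mrpow_neg_half_conj hA.1 hB).isSelfAdjoint]
  have h1 := mrpow_mul_mrpow_neg hA (-(1 / 2))
  rw [neg_neg] at h1
  rw [← mul_assoc, ← mul_assoc, mrpow_mul_mrpow_neg hA, one_mul, mul_assoc, h1, mul_one]

lemma anabla_eq_operatorPerspective (hA : A.PosDef) (hB : B.IsHermitian) (w : ℝ) :
    anabla w A B = operatorPerspective A B ((1 - w) • 1 + w • id) := by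
  rw [map_add, map_smul, map_smul, operatorPerspective_one hA hB,
    operatorPerspective_id hA hB, anabla, Complex.coe_smul, Complex.coe_smul]

lemma operatorPerspective_mono (hA : A.IsHermitian) {f g : ℝ → ℝ}
    (hfg : ∀ x ∈ spectrum ℝ (mrpow A (-(1 / 2)) * B * mrpow A (-(1 / 2))), f x ≤ g x) :
    operatorPerspective A B f ≤ operatorPerspective A B g :=
  (isHermitian_mrpow hA _).isSelfAdjoint.conjugate_le_conjugate
    (cfc_mono hfg (finite_real_spectrum.continuousOn _) (finite_real_spectrum.continuousOn _))

end OperatorPerspective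

section Spectrum

variable {n : ℕ} {A B : Matrix (Fin n) (Fin n) ℂ}

lemma mrpow_neg_half_conj_algebraMap (hA : A.PosDef) (c : ℝ) :
    mrpow A (-(1 / 2)) * algebraMap ℝ _ c * mrpow A (-(1 / 2))
      = cfc (fun x : ℝ => c * x ^ (-1 : ℝ)) A := by
  rw [Algebra.algebraMap_eq_smul_one, mul_smul_comm, mul_one, smul_mul_assoc,
    mrpow_mul_mrpow hA, cfc_const_mul _ _ _ (finite_real_spectrum.continuousOn _),
    mrpow_eq_cfc hA.1]
  norm_num

lemma div_le_of_mem_spectrum_conj (hA : A.PosDef) (hB : B.IsHermitian) {m M : ℝ} (hM : 0 ≤ M)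
    (hAm : A ≤ algebraMap ℝ _ m) (hMB : algebraMap ℝ _ M ≤ B) :
    ∀ x ∈ spectrum ℝ (mrpow A (-(1 / 2)) * B * mrpow A (-(1 / 2))), M / m ≤ x := by
  have hspec := (le_algebraMap_iff_spectrum_le hA.1.isSelfAdjoint).1 hAm
  have hlow : algebraMap ℝ _ (M / m)
      ≤ mrpow A (-(1 / 2)) * algebraMap ℝ _ M * mrpow A (-(1 / 2)) := by
    rw [mrpow_neg_half_conj_algebraMap hA,
      algebraMap_le_cfc_iff _ _ _ (finite_real_spectrum.continuousOn _) hA.1.isSelfAdjoint]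
    intro x hx
    rw [Real.rpow_neg_one, ← div_eq_mul_inv]
    exact div_le_div_of_nonneg_left hM (hA.isStrictlyPositive.spectrum_pos hx) (hspec x hx)
  have hconj := (isHermitian_mrpow hA.1 (-(1 / 2))).isSelfAdjoint.conjugate_le_conjugate hMB
  exact (algebraMap_le_iff_le_spectrum (isHermitian_mrpow_neg_half_conj hA.1 hB).isSelfAdjoint).1
    (hlow.trans hconj)

lemma le_div_of_mem_spectrum_conj (hA : A.PosDef) (hB : B.IsHermitian) {m M : ℝ} (hm : 0 ≤ m)
    (hM : 0 < M) (hMA : algebraMap ℝ _ M ≤ A) (hBm : B ≤ algebraMap ℝ _ m) :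
    ∀ x ∈ spectrum ℝ (mrpow A (-(1 / 2)) * B * mrpow A (-(1 / 2))), x ≤ m / M := by
  have hspec := (algebraMap_le_iff_le_spectrum hA.1.isSelfAdjoint).1 hMA
  have hup : mrpow A (-(1 / 2)) * algebraMap ℝ _ m * mrpow A (-(1 / 2))
      ≤ algebraMap ℝ _ (m / M) := by
    rw [mrpow_neg_half_conj_algebraMap hA,
      cfc_le_algebraMap_iff _ _ _ (finite_real_spectrum.continuousOn _) hA.1.isSelfAdjoint]
    intro x hx
    rw [Real.rpow_neg_one, ← div_eq_mul_inv]
    exact div_le_div_of_nonneg_left hm hM (hspec x hx)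
  have hconj := (isHermitian_mrpow hA.1 (-(1 / 2))).isSelfAdjoint.conjugate_le_conjugate hBm
  exact (le_algebraMap_iff_spectrum_le (isHermitian_mrpow_neg_half_conj hA.1 hB).isSelfAdjoint).1
    (hconj.trans hup)

lemma pos_of_mem_spectrum_conj (hA : A.PosDef) (hB : B.PosDef) :
    ∀ x ∈ spectrum ℝ (mrpow A (-(1 / 2)) * B * mrpow A (-(1 / 2))), 0 < x := by
  have hunit : IsUnit (mrpow A (-(1 / 2))) :=
    IsUnit.of_mul_eq_one (mrpow A (1 / 2)) (by simpa using mrpow_mul_mrpow_neg hA (-(1 / 2)))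
  have hpos := hB.mul_mul_conjTranspose_same (vecMul_injective_iff_isUnit.2 hunit)
  rw [(isHermitian_mrpow hA.1 _).eq] at hpos
  exact fun x hx => hpos.isStrictlyPositive.spectrum_pos hx

end Spectrum

theorem stmt_10_general {n : ℕ} (A B : Matrix (Fin n) (Fin n) ℂ) (m m' M M' v h r r1 rh1 : ℝ)
    (hA : A.PosDef) (hB : B.PosDef)
    (hm : 0 < m) (hM : 0 < M) (hmM : m < M)
    (hcond : (loewner ((m' : ℂ) • 1) A ∧ loewner A ((m : ℂ) • 1) ∧
        loewner ((M : ℂ) • 1) B ∧ loewner B ((M' : ℂ) • 1)) ∨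
      (loewner ((m' : ℂ) • 1) B ∧ loewner B ((m : ℂ) • 1) ∧
        loewner ((M : ℂ) • 1) A ∧ loewner A ((M' : ℂ) • 1)))
    (hh : h = M / m) (hr : r = min v (1 - v))
    (hr1 : r1 = min (2 * r) (1 - 2 * r)) (hrh1 : rh1 = min (2 * r1) (1 - 2 * r1))
    (hv0 : 0 < v) (hv : v ≤ 1 / 2) :
    loewner
      (((2 * v : ℝ) : ℂ) • (anabla (1 / 2) A B - asharp (1 / 2) A B)
        + ((r1 : ℝ) : ℂ) • (asharp (1 / 2) A B - (2 : ℂ) • asharp (1 / 4) A B + A)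
        + ((Kant (h ^ ((1 : ℝ) / 4)) ^ rh1 : ℝ) : ℂ) • asharp v A B)
      (anabla v A B) := by
  have hh1 : 1 ≤ h := hh ▸ (one_le_div hm).2 hmM.le
  have hr1' : r1 = min (2 * v) (1 - 2 * v) := by
    rw [hr1, hr, min_eq_left (by linarith : v ≤ 1 - v)]
  have hspec : ∀ x ∈ spectrum ℝ (mrpow A (-(1 / 2)) * B * mrpow A (-(1 / 2))),
      0 < x ∧ (h ≤ x ∨ x ≤ h⁻¹) := by
    simp only [loewner_iff_le, ofReal_smul_one] at hcond
    intro x hx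
    refine ⟨pos_of_mem_spectrum_conj hA hB x hx, ?_⟩
    rcases hcond with ⟨-, hAm, hMB, -⟩ | ⟨-, hBm, hMA, -⟩
    · exact .inl (hh ▸ div_le_of_mem_spectrum_conj hA hB.1 hM.le hAm hMB x hx)
    · exact .inr (hh ▸ inv_div M m ▸ le_div_of_mem_spectrum_conj hA hB.1 hm.le hM hMA hBm x hx)
  have hlhs : ((2 * v : ℝ) : ℂ) • (anabla (1 / 2) A B - asharp (1 / 2) A B)
        + ((r1 : ℝ) : ℂ) • (asharp (1 / 2) A B - (2 : ℂ) • asharp (1 / 4) A B + A)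
        + ((Kant (h ^ ((1 : ℝ) / 4)) ^ rh1 : ℝ) : ℂ) • asharp v A B
      = operatorPerspective A B
          ((2 * v) • (((1 - 1 / 2 : ℝ) • 1 + (1 / 2 : ℝ) • id) - (· ^ (1 / 2 : ℝ)))
          + r1 • ((· ^ (1 / 2 : ℝ)) - (2 : ℝ) • (· ^ (1 / 4 : ℝ)) + 1)
          + Kant (h ^ ((1 : ℝ) / 4)) ^ rh1 • (· ^ v)) := by
    rw [anabla_eq_operatorPerspective hA hB.1]
    simp only [map_add, map_sub, map_smul, operatorPerspective_rpow hA.1 hB.1,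
      operatorPerspective_one hA hB.1, Complex.coe_smul, two_smul]
  rw [loewner_iff_le, hlhs, anabla_eq_operatorPerspective hA hB.1]
  refine operatorPerspective_mono hA.1 fun x hx => ?_
  obtain ⟨hx0, hxh⟩ := hspec x hx
  simp only [Pi.add_apply, Pi.sub_apply, Pi.smul_apply, Pi.one_apply, id_eq, smul_eq_mul, mul_one]
  exact young_refinement_le hv0 hv hh1 hr1' hrh1 hx0 hxh

theorem stmt_10 {n : ℕ} (A B : Matrix (Fin n) (Fin n) ℂ) (m m' M M' v h r r1 rh1 : ℝ)
    (hA : A.PosDef) (hB : B.PosDef)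
    (hm' : 0 < m') (hm : 0 < m) (hM : 0 < M) (hM' : 0 < M') (hmM : m < M)
    (hcond : (loewner ((m' : ℂ) • 1) A ∧ loewner A ((m : ℂ) • 1) ∧
        loewner ((M : ℂ) • 1) B ∧ loewner B ((M' : ℂ) • 1)) ∨
      (loewner ((m' : ℂ) • 1) B ∧ loewner B ((m : ℂ) • 1) ∧
        loewner ((M : ℂ) • 1) A ∧ loewner A ((M' : ℂ) • 1)))
    (hh : h = M / m) (hr : r = min v (1 - v))
    (hr1 : r1 = min (2 * r) (1 - 2 * r)) (hrh1 : rh1 = min (2 * r1) (1 - 2 * r1))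
    (hv0 : 0 < v) (hv : v ≤ 1 / 2) :
    loewner
      (((2 * v : ℝ) : ℂ) • (anabla (1 / 2) A B - asharp (1 / 2) A B)
        + ((r1 : ℝ) : ℂ) • (asharp (1 / 2) A B - (2 : ℂ) • asharp (1 / 4) A B + A)
        + ((Kant (h ^ ((1 : ℝ) / 4)) ^ rh1 : ℝ) : ℂ) • asharp v A B)
      (anabla v A B) :=
  stmt_10_general A B m m' M M' v h r r1 rh1 hA hB hm hM hmM hcond hh hr hr1 hrh1 hv0 hv
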